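/- On a flat torus T = ℝ²/Λ whose fundamental domain is a non-rectangular parallelogram, for every point x the set of points at maximal distance ρ(x,·) on T consists of exactly two points. -/

import Mathlib

/-- The Euclidean norm on `ℝ × ℝ`. -/
noncomputable def enorm2 (v : ℝ × ℝ) : ℝ := Real.sqrt (v.1 ^ 2 + v.2 ^ 2)

/-- The Euclidean dot product on `ℝ × ℝ`. -/
def dot2 (v w : ℝ × ℝ) : ℝ := v.1 * w.1 + v.2 * w.2

/-- The flat quotient metric of the torus `ℝ²/Λ`, computed on representatives:
`ρ([x],[y]) = inf_{λ ∈ Λ} |x - y - λ|`. -/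
noncomputable def torusDist (Λ : AddSubgroup (ℝ × ℝ)) (x y : ℝ × ℝ) : ℝ :=
  ⨅ l : Λ, enorm2 (x - y - (l : ℝ × ℝ))

/-!
Let `u, w` be a Lagrange–Gauss reduced basis of `Λ` (`u` a shortest nonzero vector, `w` a
shortest vector independent of `u`), so `2 |u · w| ≤ |u|² ≤ |w|²`; non-rectangularity gives
`u · w ≠ 0`, and replacing `w` by `-w` we may take `u · w < 0`. The cell spanned by `u, w` is the
union of the triangles `0, u, u + w` and `0, w, w + u`, with circumcenters `c` and `u + w - c`.
For a point `v` of such a triangle with barycentric weights `μᵢ`,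
`∑ μᵢ |v - pᵢ|² = R² - |v - c|²`, so `v` is within the circumradius `R` of a vertex, with equality
only at `v = c`. On the other hand, for this basis no lattice point lies strictly inside the
circumcircle of `0, u, u + w`, and only its three vertices lie on it. Hence the points farthest
from `Λ` are `c` and `u + w - c` modulo `Λ`, and they are distinct modulo `Λ` because `2 c`, which
lies on that circle, is not a vertex.
-/

namespace FlatTorus

def normSq (v : ℝ × ℝ) : ℝ := v.1 ^ 2 + v.2 ^ 2

def cross (v w : ℝ × ℝ) : ℝ := v.1 * w.2 - v.2 * w.1

lemma normSq_nonneg (v : ℝ × ℝ) : 0 ≤ normSq v := by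
  unfold normSq; positivity

lemma normSq_eq_zero {v : ℝ × ℝ} : normSq v = 0 ↔ v = 0 := by
  simp only [normSq, Prod.ext_iff, Prod.fst_zero, Prod.snd_zero]
  constructor
  · intro h; constructor <;> nlinarith [sq_nonneg v.1, sq_nonneg v.2]
  · rintro ⟨h₁, h₂⟩; simp [h₁, h₂]

lemma normSq_pos {v : ℝ × ℝ} : 0 < normSq v ↔ v ≠ 0 := by
  rw [(normSq_nonneg v).lt_iff_ne', Ne, normSq_eq_zero]

lemma normSq_neg (v : ℝ × ℝ) : normSq (-v) = normSq v := by
  simp [normSq]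

lemma normSq_add (x y : ℝ × ℝ) : normSq (x + y) = normSq x + 2 * dot2 x y + normSq y := by
  simp only [normSq, dot2, Prod.fst_add, Prod.snd_add]; ring

lemma normSq_sub (x y : ℝ × ℝ) : normSq (x - y) = normSq x - 2 * dot2 x y + normSq y := by
  simp only [normSq, dot2, Prod.fst_sub, Prod.snd_sub]; ring

lemma normSq_smul_add_smul (s t : ℝ) (u w : ℝ × ℝ) :
    normSq (s • u + t • w) = s ^ 2 * normSq u + 2 * s * t * dot2 u w + t ^ 2 * normSq w := by
  simp only [normSq, dot2, Prod.fst_add, Prod.snd_add, Prod.smul_fst, Prod.smul_snd, smul_eq_mul]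
  ring

lemma dot2_comm (v w : ℝ × ℝ) : dot2 v w = dot2 w v := by
  simp only [dot2]; ring

lemma dot2_neg_right (v w : ℝ × ℝ) : dot2 v (-w) = -dot2 v w := by
  simp only [dot2, Prod.fst_neg, Prod.snd_neg]; ring

lemma cross_anticomm (v w : ℝ × ℝ) : -cross v w = cross w v := by
  simp only [cross]; ring

lemma cross_sq_add_dot2_sq (v w : ℝ × ℝ) :
    cross v w ^ 2 + dot2 v w ^ 2 = normSq v * normSq w := by
  simp only [cross, dot2, normSq]; ring

lemma cross_add_smul_right (u w : ℝ × ℝ) (k : ℝ) : cross u (w + k • u) = cross u w := by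
  simp only [cross, Prod.fst_add, Prod.snd_add, Prod.smul_fst, Prod.smul_snd, smul_eq_mul]; ring

lemma cross_smul_add_smul_left (u w : ℝ × ℝ) (s t : ℝ) :
    cross (s • u + t • w) w = s * cross u w := by
  simp only [cross, Prod.fst_add, Prod.snd_add, Prod.smul_fst, Prod.smul_snd, smul_eq_mul]; ring

lemma cross_smul_add_smul_right (u w : ℝ × ℝ) (s t : ℝ) :
    cross u (s • u + t • w) = t * cross u w := by
  simp only [cross, Prod.fst_add, Prod.snd_add, Prod.smul_fst, Prod.smul_snd, smul_eq_mul]; ring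

lemma cross_div_smul_add_cross_div_smul {u w : ℝ × ℝ} (h : cross u w ≠ 0) (v : ℝ × ℝ) :
    (cross v w / cross u w) • u + (cross u v / cross u w) • w = v := by
  ext <;> simp only [Prod.fst_add, Prod.snd_add, Prod.smul_fst, Prod.smul_snd, smul_eq_mul] <;>
    field_simp <;> simp only [cross] <;> ring

lemma exists_dot2_eq_and_dot2_eq {u w : ℝ × ℝ} (h : cross u w ≠ 0) (α β : ℝ) :
    ∃ c, dot2 c u = α ∧ dot2 c w = β :=
  ⟨((α * w.2 - β * u.2) / cross u w, (β * u.1 - α * w.1) / cross u w), by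
    constructor <;> simp only [dot2] <;> field_simp <;> simp only [cross] <;> ring⟩

lemma cross_ne_zero_of_linearIndependent {a b : ℝ × ℝ} (h : LinearIndependent ℝ ![a, b]) :
    cross a b ≠ 0 := by
  rw [LinearIndependent.pair_iff] at h
  intro hab
  simp only [cross] at hab
  have h₂ := h b.2 (-a.2) (by ext <;> simp <;> linarith)
  have h₁ := h b.1 (-a.1) (by ext <;> simp <;> linarith)
  have ha : a = 0 := Prod.ext (by simpa using h₁.2) (by simpa using h₂.2)
  exact one_ne_zero (h 1 0 (by simp [ha])).1

lemma enorm2_eq_sqrt (v : ℝ × ℝ) : enorm2 v = √(normSq v) := rfl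

lemma enorm2_le_enorm2_iff {v w : ℝ × ℝ} : enorm2 v ≤ enorm2 w ↔ normSq v ≤ normSq w :=
  Real.sqrt_le_sqrt_iff (normSq_nonneg w)

noncomputable def latticeDist (Λ : AddSubgroup (ℝ × ℝ)) (v : ℝ × ℝ) : ℝ :=
  ⨅ l : Λ, enorm2 (v - l)

lemma torusDist_eq_latticeDist (Λ : AddSubgroup (ℝ × ℝ)) (x y : ℝ × ℝ) :
    torusDist Λ x y = latticeDist Λ (x - y) := rfl

lemma latticeDist_le {Λ : AddSubgroup (ℝ × ℝ)} {l : ℝ × ℝ} (hl : l ∈ Λ) (v : ℝ × ℝ) :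
    latticeDist Λ v ≤ enorm2 (v - l) :=
  ciInf_le ⟨0, by rintro _ ⟨_, rfl⟩; exact Real.sqrt_nonneg _⟩ (⟨l, hl⟩ : Λ)

lemma le_latticeDist {Λ : AddSubgroup (ℝ × ℝ)} {v : ℝ × ℝ} {d : ℝ}
    (h : ∀ l ∈ Λ, d ≤ enorm2 (v - l)) : d ≤ latticeDist Λ v :=
  le_ciInf fun l => h l l.2

def IsCircumcenter (c p₀ p₁ p₂ : ℝ × ℝ) : Prop :=
  normSq (c - p₁) = normSq (c - p₀) ∧ normSq (c - p₂) = normSq (c - p₀)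

lemma isCircumcenter_zero_iff {c p q : ℝ × ℝ} :
    IsCircumcenter c 0 p q ↔ 2 * dot2 c p = normSq p ∧ 2 * dot2 c q = normSq q := by
  simp only [IsCircumcenter, sub_zero, normSq_sub]
  constructor <;> rintro ⟨h₁, h₂⟩ <;> constructor <;> linarith

lemma exists_isCircumcenter_zero {p q : ℝ × ℝ} (h : cross p q ≠ 0) :
    ∃ c, IsCircumcenter c 0 p q := by
  obtain ⟨c, hp, hq⟩ := exists_dot2_eq_and_dot2_eq h (normSq p / 2) (normSq q / 2)
  exact ⟨c, isCircumcenter_zero_iff.2 ⟨by linarith, by linarith⟩⟩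

lemma weighted_normSq_sub_vertices {c p₀ p₁ p₂ v : ℝ × ℝ} (hc : IsCircumcenter c p₀ p₁ p₂)
    {μ₀ μ₁ μ₂ : ℝ} (hμ : μ₀ + μ₁ + μ₂ = 1) (hv : v = μ₀ • p₀ + μ₁ • p₁ + μ₂ • p₂) :
    μ₀ * normSq (v - p₀) + μ₁ * normSq (v - p₁) + μ₂ * normSq (v - p₂) =
      normSq (c - p₀) - normSq (v - c) := by
  obtain ⟨h₁, h₂⟩ := hc
  obtain rfl : μ₀ = 1 - μ₁ - μ₂ := by linarith
  subst hv
  simp only [normSq, Prod.fst_add, Prod.snd_add, Prod.fst_sub, Prod.snd_sub, Prod.smul_fst,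
    Prod.smul_snd, smul_eq_mul] at h₁ h₂ ⊢
  linear_combination μ₁ * h₁ + μ₂ * h₂

lemma eq_of_isCircumcenter_of_le {c p₀ p₁ p₂ v : ℝ × ℝ} (hc : IsCircumcenter c p₀ p₁ p₂)
    {μ₀ μ₁ μ₂ : ℝ} (h₀ : 0 ≤ μ₀) (h₁ : 0 ≤ μ₁) (h₂ : 0 ≤ μ₂) (hμ : μ₀ + μ₁ + μ₂ = 1)
    (hv : v = μ₀ • p₀ + μ₁ • p₁ + μ₂ • p₂) (hv₀ : normSq (c - p₀) ≤ normSq (v - p₀))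
    (hv₁ : normSq (c - p₀) ≤ normSq (v - p₁)) (hv₂ : normSq (c - p₀) ≤ normSq (v - p₂)) :
    v = c := by
  have key := weighted_normSq_sub_vertices hc hμ hv
  have hr : (μ₀ + μ₁ + μ₂) * normSq (c - p₀) = normSq (c - p₀) := by rw [hμ, one_mul]
  have : normSq (v - c) ≤ 0 := by
    linarith [mul_le_mul_of_nonneg_left hv₀ h₀, mul_le_mul_of_nonneg_left hv₁ h₁,
      mul_le_mul_of_nonneg_left hv₂ h₂]
  exact sub_eq_zero.1 (normSq_eq_zero.1 (this.antisymm (normSq_nonneg _)))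

lemma exists_vertex_normSq_sub_le {c p₀ p₁ p₂ v : ℝ × ℝ} (hc : IsCircumcenter c p₀ p₁ p₂)
    {μ₀ μ₁ μ₂ : ℝ} (h₀ : 0 ≤ μ₀) (h₁ : 0 ≤ μ₁) (h₂ : 0 ≤ μ₂) (hμ : μ₀ + μ₁ + μ₂ = 1)
    (hv : v = μ₀ • p₀ + μ₁ • p₁ + μ₂ • p₂) :
    ∃ p ∈ ({p₀, p₁, p₂} : Set (ℝ × ℝ)), normSq (v - p) ≤ normSq (c - p₀) := by
  by_contra! h
  simp only [Set.mem_insert_iff, Set.mem_singleton_iff, forall_eq_or_imp, forall_eq] at h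
  obtain ⟨hv₀, hv₁, hv₂⟩ := h
  obtain rfl := eq_of_isCircumcenter_of_le hc h₀ h₁ h₂ hμ hv hv₀.le hv₁.le hv₂.le
  exact hv₀.ne rfl

lemma IsCircumcenter.add_sub {u w c : ℝ × ℝ} (hc : IsCircumcenter c 0 u (u + w)) :
    IsCircumcenter (u + w - c) 0 w (w + u) := by
  obtain ⟨h₁, h₂⟩ := hc
  have h₀ : normSq (u + w - c - 0) = normSq (c - 0) := by
    rw [show u + w - c - 0 = -(c - (u + w)) by abel, normSq_neg, h₂]
  constructor
  · rw [h₀, show u + w - c - w = -(c - u) by abel, normSq_neg, h₁]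
  · rw [h₀, show u + w - c - (w + u) = -(c - 0) by abel, normSq_neg]

lemma IsCircumcenter.enorm2_add_sub {u w c : ℝ × ℝ} (hc : IsCircumcenter c 0 u (u + w)) :
    enorm2 (u + w - c) = enorm2 c := by
  rw [enorm2_eq_sqrt, enorm2_eq_sqrt, show u + w - c = -(c - (u + w)) by abel, normSq_neg, hc.2,
    sub_zero]

-- Each summand is nonnegative when `u · w < 0` and `-2 u · w ≤ |u|², |w|²`.
lemma IsCircumcenter.normSq_sub_zsmul_add_zsmul {u w c : ℝ × ℝ}
    (hc : IsCircumcenter c 0 u (u + w)) (m n : ℤ) :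
    normSq (c - (m • u + n • w)) = normSq c +
      ((normSq u + 2 * dot2 u w) * (m ^ 2 - m : ℤ) + (normSq w + 2 * dot2 u w) * (n ^ 2 - n : ℤ)
        - 2 * dot2 u w * (m ^ 2 - m * n + n ^ 2 - m : ℤ)) := by
  obtain ⟨h₁, h₂⟩ := isCircumcenter_zero_iff.1 hc
  simp only [normSq, dot2, Prod.fst_add, Prod.snd_add, Prod.fst_sub, Prod.snd_sub,
    Prod.smul_fst, Prod.smul_snd] at h₁ h₂ ⊢
  simp only [zsmul_eq_mul]
  push_cast
  linear_combination (n - m : ℝ) * h₁ - n * h₂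

lemma latticeDist_le_of_mem_triangle {Λ : AddSubgroup (ℝ × ℝ)} {u w c q v : ℝ × ℝ}
    (hu : u ∈ Λ) (hw : w ∈ Λ) (hq : q ∈ Λ) (hc : IsCircumcenter c 0 u (u + w))
    {s t : ℝ} (ht : 0 ≤ t) (hts : t ≤ s) (hs : s ≤ 1) (hv : v - q = s • u + t • w) :
    latticeDist Λ v ≤ enorm2 c ∧ (latticeDist Λ v = enorm2 c → v - c ∈ Λ) := by
  have hv' : v - q = (1 - s) • (0 : ℝ × ℝ) + (s - t) • u + t • (u + w) := by
    rw [hv]; module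
  have hvert : ∀ p ∈ ({0, u, u + w} : Set (ℝ × ℝ)), q + p ∈ Λ := by
    simp only [Set.mem_insert_iff, Set.mem_singleton_iff, forall_eq_or_imp, forall_eq]
    exact ⟨by simpa, add_mem hq hu, add_mem hq (add_mem hu hw)⟩
  constructor
  · obtain ⟨p, hp, hle⟩ :=
      exists_vertex_normSq_sub_le hc (by linarith) (by linarith) ht (by ring) hv'
    calc latticeDist Λ v ≤ enorm2 (v - (q + p)) := latticeDist_le (hvert p hp) v
      _ ≤ enorm2 c := by rwa [enorm2_le_enorm2_iff, ← sub_sub, ← sub_zero c]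
  · intro heq
    have hfar : ∀ p ∈ ({0, u, u + w} : Set (ℝ × ℝ)), normSq (c - 0) ≤ normSq (v - q - p) :=
      fun p hp => by
        rw [sub_zero, sub_sub, ← enorm2_le_enorm2_iff, ← heq]
        exact latticeDist_le (hvert p hp) v
    simp only [Set.mem_insert_iff, Set.mem_singleton_iff, forall_eq_or_imp, forall_eq] at hfar
    have hvc := eq_of_isCircumcenter_of_le hc (by linarith) (by linarith) ht (by ring) hv'
      hfar.1 hfar.2.1 hfar.2.2
    rw [sub_eq_iff_eq_add, ← sub_eq_iff_eq_add'] at hvc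
    exact hvc ▸ hq

lemma latticeDist_le_circumradius {Λ : AddSubgroup (ℝ × ℝ)} {u w c : ℝ × ℝ} (hu : u ∈ Λ)
    (hw : w ∈ Λ) (hcr : cross u w ≠ 0) (hc : IsCircumcenter c 0 u (u + w)) (v : ℝ × ℝ) :
    latticeDist Λ v ≤ enorm2 c ∧
      (latticeDist Λ v = enorm2 c → v - c ∈ Λ ∨ v - (u + w - c) ∈ Λ) := by
  set s := cross v w / cross u w
  set t := cross u v / cross u w
  have hq : ⌊s⌋ • u + ⌊t⌋ • w ∈ Λ := add_mem (zsmul_mem hu _) (zsmul_mem hw _)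
  have hv : v - (⌊s⌋ • u + ⌊t⌋ • w) = Int.fract s • u + Int.fract t • w := by
    conv_lhs => rw [← cross_div_smul_add_cross_div_smul hcr v]
    rw [← Int.self_sub_floor, ← Int.self_sub_floor, sub_smul, sub_smul, Int.cast_smul_eq_zsmul,
      Int.cast_smul_eq_zsmul]
    abel
  rcases le_total (Int.fract t) (Int.fract s) with h | h
  · obtain ⟨hle, heq⟩ := latticeDist_le_of_mem_triangle hu hw hq hc (Int.fract_nonneg _) h
      (Int.fract_lt_one _).le hv
    exact ⟨hle, fun h => .inl (heq h)⟩
  · obtain ⟨hle, heq⟩ := latticeDist_le_of_mem_triangle hw hu hq hc.add_sub (Int.fract_nonneg _) h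
      (Int.fract_lt_one _).le (by rw [hv, add_comm])
    rw [hc.enorm2_add_sub] at hle heq
    exact ⟨hle, fun h => .inr (heq h)⟩

-- `2 (m² - mn + n² - m) = (m - n)² + (m - 1)² + n² - 1`, and the three squares cannot all vanish.
lemma sq_sub_mul_add_sq_sub_nonneg (m n : ℤ) : 0 ≤ m ^ 2 - m * n + n ^ 2 - m := by
  nlinarith [sq_nonneg (m - n), sq_nonneg (m - 1), sq_nonneg n]

lemma eq_of_sq_sub_mul_add_sq_sub_eq_zero {m n : ℤ} (h : m ^ 2 - m * n + n ^ 2 - m = 0) :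
    (m = 0 ∧ n = 0) ∨ (m = 1 ∧ n = 0) ∨ (m = 1 ∧ n = 1) := by
  have hn : n ^ 2 ≤ 1 := by nlinarith [sq_nonneg (m - n), sq_nonneg (m - 1)]
  have hm : (m - 1) ^ 2 ≤ 1 := by nlinarith [sq_nonneg (m - n), sq_nonneg n]
  obtain ⟨hn₁, hn₂⟩ : -1 ≤ n ∧ n ≤ 1 := by constructor <;> nlinarith
  obtain ⟨hm₁, hm₂⟩ : 0 ≤ m ∧ m ≤ 2 := by constructor <;> nlinarith
  interval_cases m <;> interval_cases n <;> simp_all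

section ObtuseBasis

variable {Λ : AddSubgroup (ℝ × ℝ)} {u w c : ℝ × ℝ}

lemma normSq_le_normSq_sub_zsmul_add_zsmul (hp : dot2 u w < 0)
    (hpu : -2 * dot2 u w ≤ normSq u) (hpw : -2 * dot2 u w ≤ normSq w)
    (hc : IsCircumcenter c 0 u (u + w)) (m n : ℤ) :
    normSq c ≤ normSq (c - (m • u + n • w)) ∧
      (normSq (c - (m • u + n • w)) = normSq c → m ^ 2 - m * n + n ^ 2 - m = 0) := by
  rw [hc.normSq_sub_zsmul_add_zsmul]
  have hm : 0 ≤ (normSq u + 2 * dot2 u w) * (m ^ 2 - m : ℤ) :=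
    mul_nonneg (by linarith) (Int.cast_nonneg (sub_nonneg.2 (Int.le_self_sq m)))
  have hn : 0 ≤ (normSq w + 2 * dot2 u w) * (n ^ 2 - n : ℤ) :=
    mul_nonneg (by linarith) (Int.cast_nonneg (sub_nonneg.2 (Int.le_self_sq n)))
  have hmn : 0 ≤ -dot2 u w * (m ^ 2 - m * n + n ^ 2 - m : ℤ) :=
    mul_nonneg (by linarith) (Int.cast_nonneg (sq_sub_mul_add_sq_sub_nonneg m n))
  refine ⟨by linarith, fun h => ?_⟩
  have : -dot2 u w * (m ^ 2 - m * n + n ^ 2 - m : ℤ) = 0 := by linarith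
  exact_mod_cast (mul_eq_zero.1 this).resolve_left (by linarith)

lemma latticeDist_circumcenter (hΛ : Λ = AddSubgroup.closure {u, w}) (hp : dot2 u w < 0)
    (hpu : -2 * dot2 u w ≤ normSq u) (hpw : -2 * dot2 u w ≤ normSq w)
    (hc : IsCircumcenter c 0 u (u + w)) : latticeDist Λ c = enorm2 c := by
  refine le_antisymm (by simpa using latticeDist_le (zero_mem Λ) c) (le_latticeDist fun l hl => ?_)
  rw [hΛ, AddSubgroup.mem_closure_pair] at hl
  obtain ⟨m, n, rfl⟩ := hl
  exact enorm2_le_enorm2_iff.2 (normSq_le_normSq_sub_zsmul_add_zsmul hp hpu hpw hc m n).1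

lemma two_smul_circumcenter_notMem (hΛ : Λ = AddSubgroup.closure {u, w}) (hp : dot2 u w < 0)
    (hpu : -2 * dot2 u w ≤ normSq u) (hpw : -2 * dot2 u w ≤ normSq w)
    (hc : IsCircumcenter c 0 u (u + w)) : 2 • c ∉ Λ := by
  rw [hΛ, AddSubgroup.mem_closure_pair]
  rintro ⟨m, n, hmn⟩
  have hform := (normSq_le_normSq_sub_zsmul_add_zsmul hp hpu hpw hc m n).2 (by
    rw [hmn, two_smul, sub_add_cancel_left, normSq_neg])
  obtain ⟨h₁, h₂⟩ := isCircumcenter_zero_iff.1 hc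
  have e₁ := congrArg (dot2 · u) hmn
  have e₂ := congrArg (dot2 · w) hmn
  simp only [normSq, dot2, Prod.fst_add, Prod.snd_add, Prod.smul_fst, Prod.smul_snd]
    at e₁ e₂ h₁ h₂ hp hpu hpw
  obtain ⟨rfl, rfl⟩ | ⟨rfl, rfl⟩ | ⟨rfl, rfl⟩ := eq_of_sq_sub_mul_add_sq_sub_eq_zero hform <;>
    simp only [zsmul_eq_mul, two_smul] at e₁ e₂ <;> push_cast at e₁ e₂ <;> nlinarith

lemma cross_ne_zero_of_obtuse (hp : dot2 u w < 0) (hpu : -2 * dot2 u w ≤ normSq u)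
    (hpw : -2 * dot2 u w ≤ normSq w) : cross u w ≠ 0 := by
  intro h
  have := cross_sq_add_dot2_sq u w
  rw [h] at this
  nlinarith [mul_le_mul hpu hpw (by linarith) (normSq_nonneg u)]

lemma exists_farthest_of_latticeDist {c₁ c₂ : ℝ × ℝ} {R : ℝ}
    (hle : ∀ v, latticeDist Λ v ≤ R) (h₁ : latticeDist Λ c₁ = R) (h₂ : latticeDist Λ c₂ = R)
    (h₁₂ : c₂ - c₁ ∉ Λ) (heq : ∀ v, latticeDist Λ v = R → v - c₁ ∈ Λ ∨ v - c₂ ∈ Λ)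
    (x : ℝ × ℝ) :
    ∃ d : ℝ, IsGreatest (Set.range (torusDist Λ x)) d ∧
      ∃ y₁ y₂ : ℝ × ℝ, torusDist Λ x y₁ = d ∧ torusDist Λ x y₂ = d ∧ y₁ - y₂ ∉ Λ ∧
        ∀ z : ℝ × ℝ, torusDist Λ x z = d → z - y₁ ∈ Λ ∨ z - y₂ ∈ Λ := by
  have hx (c : ℝ × ℝ) : torusDist Λ x (x - c) = latticeDist Λ c := by
    rw [torusDist_eq_latticeDist, sub_sub_cancel]
  refine ⟨R, ⟨⟨x - c₁, (hx c₁).trans h₁⟩, ?_⟩, x - c₁, x - c₂, (hx c₁).trans h₁,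
    (hx c₂).trans h₂, by rwa [sub_sub_sub_cancel_left], fun z hz => ?_⟩
  · rintro _ ⟨y, rfl⟩
    exact hle _
  have hsub (c : ℝ × ℝ) : z - (x - c) = -(x - z - c) := by abel
  rw [hsub, hsub, neg_mem_iff, neg_mem_iff]
  exact heq _ hz

theorem exists_farthest_of_obtuse_basis (hΛ : Λ = AddSubgroup.closure {u, w})
    (hp : dot2 u w < 0) (hpu : -2 * dot2 u w ≤ normSq u) (hpw : -2 * dot2 u w ≤ normSq w)
    (x : ℝ × ℝ) :
    ∃ d : ℝ, IsGreatest (Set.range (torusDist Λ x)) d ∧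
      ∃ y₁ y₂ : ℝ × ℝ, torusDist Λ x y₁ = d ∧ torusDist Λ x y₂ = d ∧ y₁ - y₂ ∉ Λ ∧
        ∀ z : ℝ × ℝ, torusDist Λ x z = d → z - y₁ ∈ Λ ∨ z - y₂ ∈ Λ := by
  have hu : u ∈ Λ := hΛ ▸ AddSubgroup.subset_closure (by simp)
  have hw : w ∈ Λ := hΛ ▸ AddSubgroup.subset_closure (by simp)
  have hcr := cross_ne_zero_of_obtuse hp hpu hpw
  obtain ⟨c, hc⟩ := exists_isCircumcenter_zero (p := u) (q := u + w) (by
    rwa [← cross_add_smul_right u w 1, one_smul, add_comm] at hcr)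
  have hc' : latticeDist Λ (u + w - c) = enorm2 c := by
    rw [← hc.enorm2_add_sub]
    refine latticeDist_circumcenter (by rw [hΛ, Set.pair_comm]) ?_ ?_ ?_ hc.add_sub <;>
      rwa [dot2_comm]
  refine exists_farthest_of_latticeDist (latticeDist_le_circumradius hu hw hcr hc · |>.1)
    (latticeDist_circumcenter hΛ hp hpu hpw hc) hc' (fun h => ?_)
    (latticeDist_le_circumradius hu hw hcr hc · |>.2) x
  refine two_smul_circumcenter_notMem hΛ hp hpu hpw hc ?_
  rw [show 2 • c = u + w - (u + w - c - c) by rw [two_smul]; abel]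
  exact sub_mem (add_mem hu hw) h

end ObtuseBasis

lemma finite_setOf_mem_closure_normSq_le {a b : ℝ × ℝ} (hab : cross a b ≠ 0) (r : ℝ) :
    {v | v ∈ AddSubgroup.closure {a, b} ∧ normSq v ≤ r}.Finite := by
  set K := r * (normSq a + normSq b) / cross a b ^ 2 with hK_def
  have hK : {m : ℤ | (m : ℝ) ^ 2 ≤ K}.Finite := by
    refine (Set.finite_Icc (-⌈K⌉) ⌈K⌉).subset fun m (hm : (m : ℝ) ^ 2 ≤ K) => ?_
    have h₁ : (m : ℝ) ≤ m ^ 2 := by exact_mod_cast Int.le_self_sq m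
    have h₂ : (-m : ℝ) ≤ m ^ 2 := by exact_mod_cast (neg_sq m ▸ Int.le_self_sq (-m))
    have h₃ := Int.le_ceil K
    constructor <;> [exact_mod_cast (by linarith : (-⌈K⌉ : ℝ) ≤ m);
      exact_mod_cast (by linarith : (m : ℝ) ≤ ⌈K⌉)]
  refine ((hK.prod hK).image fun q => q.1 • a + q.2 • b).subset ?_
  rintro v ⟨hv, hr⟩
  obtain ⟨m, n, rfl⟩ := AddSubgroup.mem_closure_pair.1 hv
  refine ⟨(m, n), ⟨?_, ?_⟩, rfl⟩ <;> simp only [Set.mem_ofPred_eq] <;>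
    rw [hK_def, le_div_iff₀ (by positivity), ← mul_pow]
  · rw [← cross_smul_add_smul_left a b _ (n : ℝ), Int.cast_smul_eq_zsmul, Int.cast_smul_eq_zsmul]
    nlinarith [cross_sq_add_dot2_sq (m • a + n • b) b, sq_nonneg (dot2 (m • a + n • b) b),
      normSq_nonneg a, normSq_nonneg b, normSq_nonneg (m • a + n • b)]
  · rw [← cross_smul_add_smul_right a b (m : ℝ), Int.cast_smul_eq_zsmul, Int.cast_smul_eq_zsmul]
    nlinarith [cross_sq_add_dot2_sq a (m • a + n • b), sq_nonneg (dot2 a (m • a + n • b)),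
      normSq_nonneg a, normSq_nonneg b, normSq_nonneg (m • a + n • b)]

lemma exists_normSq_le_of_subset_closure {a b : ℝ × ℝ} (hab : cross a b ≠ 0)
    {S : Set (ℝ × ℝ)} (hS : S ⊆ AddSubgroup.closure {a, b}) (hne : S.Nonempty) :
    ∃ u ∈ S, ∀ v ∈ S, normSq u ≤ normSq v := by
  obtain ⟨v₀, hv₀⟩ := hne
  have hfin : (S ∩ {v | normSq v ≤ normSq v₀}).Finite :=
    (finite_setOf_mem_closure_normSq_le hab _).subset fun v hv => ⟨hS hv.1, hv.2⟩
  obtain ⟨u, ⟨huS, hu₀⟩, hmin⟩ :=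
    Set.exists_min_image _ normSq hfin ⟨v₀, hv₀, show normSq v₀ ≤ normSq v₀ from le_rfl⟩
  refine ⟨u, huS, fun v hv => ?_⟩
  rcases le_or_gt (normSq v) (normSq v₀) with h | h
  · exact hmin v ⟨hv, h⟩
  · exact hu₀.trans h.le

section Reduction

variable {Λ : AddSubgroup (ℝ × ℝ)} {u w : ℝ × ℝ}

lemma two_mul_abs_dot2_le (hu : u ∈ Λ) (hw : w ∈ Λ)
    (hmin : ∀ v ∈ Λ, cross u v ≠ 0 → normSq w ≤ normSq v) (hcr : cross u w ≠ 0) :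
    2 * |dot2 u w| ≤ normSq u := by
  have h₁ := hmin _ (add_mem hw hu) (by simpa using (cross_add_smul_right u w 1).trans_ne hcr)
  have h₂ := hmin _ (sub_mem hw hu)
    (by simpa [sub_eq_add_neg] using (cross_add_smul_right u w (-1)).trans_ne hcr)
  rw [normSq_add, dot2_comm] at h₁
  rw [normSq_sub, dot2_comm] at h₂
  cases abs_cases (dot2 u w) <;> linarith

-- Rounding the coordinates of `l` leaves a lattice vector with coordinates in `[-1/2, 1/2]`,
-- too short to be nonzero by the minimality of `u` and `w`.
lemma le_closure_pair_of_minimal (hu : u ∈ Λ) (hw : w ∈ Λ)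
    (hminu : ∀ v ∈ Λ, v ≠ 0 → normSq u ≤ normSq v)
    (hminw : ∀ v ∈ Λ, cross u v ≠ 0 → normSq w ≤ normSq v) (hcr : cross u w ≠ 0) :
    Λ ≤ AddSubgroup.closure {u, w} := by
  have hp := two_mul_abs_dot2_le hu hw hminw hcr
  have hA : 0 < normSq u := normSq_pos.2 (by rintro rfl; simp [cross] at hcr)
  have hAB : normSq u ≤ normSq w := hminu w hw (by rintro rfl; simp [cross] at hcr)
  intro l hl
  set s := cross l w / cross u w
  set t := cross u l / cross u w
  have hl' : l - (round s • u + round t • w) = (s - round s) • u + (t - round t) • w := by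
    conv_lhs => rw [← cross_div_smul_add_cross_div_smul hcr l]
    rw [sub_smul, sub_smul, Int.cast_smul_eq_zsmul, Int.cast_smul_eq_zsmul]
    abel
  have hl'Λ : l - (round s • u + round t • w) ∈ Λ :=
    sub_mem hl (add_mem (zsmul_mem hu _) (zsmul_mem hw _))
  have hσ := abs_sub_round s
  have hτ := abs_sub_round t
  set σ := s - round s
  set τ := t - round t
  have hσ2 : σ ^ 2 ≤ 1 / 4 := by nlinarith [sq_abs σ, abs_nonneg σ]
  by_cases hτ0 : τ = 0
  · suffices l - (round s • u + round t • w) = 0 from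
      AddSubgroup.mem_closure_pair.2 ⟨_, _, (sub_eq_zero.1 this).symm⟩
    by_contra hne
    have := hminu _ hl'Λ hne
    rw [hl', hτ0, normSq_smul_add_smul] at this
    nlinarith
  · have := hminw _ hl'Λ (by rw [hl', cross_smul_add_smul_right]; exact mul_ne_zero hτ0 hcr)
    rw [hl', normSq_smul_add_smul] at this
    have hτ2 : τ ^ 2 ≤ 1 / 4 := by nlinarith [sq_abs τ, abs_nonneg τ]
    have hστ : 2 * σ * τ * dot2 u w ≤ normSq u / 4 := by
      have : |σ * τ| ≤ 1 / 4 := by rw [abs_mul]; nlinarith [abs_nonneg σ, abs_nonneg τ]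
      nlinarith [le_abs_self (σ * τ * dot2 u w), abs_mul (σ * τ) (dot2 u w),
        abs_nonneg (σ * τ), abs_nonneg (dot2 u w)]
    nlinarith [normSq_nonneg w]

end Reduction

theorem exists_reduced_basis {a b : ℝ × ℝ} (hab : cross a b ≠ 0) :
    ∃ u w, AddSubgroup.closure {a, b} = AddSubgroup.closure {u, w} ∧
      2 * |dot2 u w| ≤ normSq u ∧ normSq u ≤ normSq w := by
  set Λ := AddSubgroup.closure {a, b}
  have ha : a ∈ Λ := AddSubgroup.subset_closure (by simp)
  have hb : b ∈ Λ := AddSubgroup.subset_closure (by simp)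
  obtain ⟨u, ⟨hu, hu0⟩, hminu⟩ := exists_normSq_le_of_subset_closure hab
    (S := {v | v ∈ Λ ∧ v ≠ 0}) (fun v hv => hv.1) ⟨a, ha, by rintro rfl; simp [cross] at hab⟩
  have hne : ∃ v ∈ Λ, cross u v ≠ 0 := by
    by_contra! h
    refine hu0 ?_
    rw [← cross_div_smul_add_cross_div_smul hab u, h b hb, ← cross_anticomm u a, h a ha]
    simp
  obtain ⟨w, ⟨hw, hcr⟩, hminw⟩ := exists_normSq_le_of_subset_closure hab
    (S := {v | v ∈ Λ ∧ cross u v ≠ 0}) (fun v hv => hv.1) hne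
  refine ⟨u, w, le_antisymm ?_ ?_, two_mul_abs_dot2_le hu hw (fun v hv h => hminw v ⟨hv, h⟩) hcr,
    hminu w ⟨hw, by rintro rfl; simp [cross] at hcr⟩⟩
  · exact le_closure_pair_of_minimal hu hw (fun v hv h => hminu v ⟨hv, h⟩)
      (fun v hv h => hminw v ⟨hv, h⟩) hcr
  · rw [AddSubgroup.closure_le, Set.insert_subset_iff, Set.singleton_subset_iff]
    exact ⟨hu, hw⟩

end FlatTorus

lemma AddSubgroup.closure_pair_neg_right {G : Type*} [AddGroup G] (u w : G) :
    AddSubgroup.closure {u, -w} = AddSubgroup.closure {u, w} := by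
  apply le_antisymm <;>
    rw [AddSubgroup.closure_le, Set.insert_subset_iff, Set.singleton_subset_iff] <;>
    refine ⟨AddSubgroup.subset_closure (by simp), ?_⟩
  · exact neg_mem (AddSubgroup.subset_closure (by simp))
  · simpa using neg_mem (AddSubgroup.subset_closure (by simp) : -w ∈ AddSubgroup.closure {u, -w})

open FlatTorus in
/-- On a flat torus `ℝ²/Λ` whose fundamental domain is a non-rectangular parallelogram
(i.e. `Λ` is a lattice admitting no orthogonal generating pair), for every point `x`
the set of points at maximal distance from `x` consists of exactly two points of the
torus. -/
theorem nonrectangular_torus_two_farthest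
    (a b : ℝ × ℝ) (hind : LinearIndependent ℝ ![a, b])
    (Λ : AddSubgroup (ℝ × ℝ)) (hΛ : Λ = AddSubgroup.closure {a, b})
    (hnonrect : ¬ ∃ a' b' : ℝ × ℝ, dot2 a' b' = 0 ∧
      Λ = AddSubgroup.closure {a', b'}) :
    ∀ x : ℝ × ℝ, ∃ d : ℝ,
      IsGreatest (Set.range (torusDist Λ x)) d ∧
      ∃ y₁ y₂ : ℝ × ℝ, torusDist Λ x y₁ = d ∧ torusDist Λ x y₂ = d ∧
        y₁ - y₂ ∉ Λ ∧
        ∀ z : ℝ × ℝ, torusDist Λ x z = d → z - y₁ ∈ Λ ∨ z - y₂ ∈ Λ := by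
  obtain ⟨u, w, huw, hpu, hAB⟩ := exists_reduced_basis (cross_ne_zero_of_linearIndependent hind)
  rw [← hΛ] at huw
  have hp : dot2 u w ≠ 0 := fun h => hnonrect ⟨u, w, h, huw⟩
  have habs := neg_abs_le (dot2 u w)
  rcases hp.lt_or_gt with hp | hp
  · exact exists_farthest_of_obtuse_basis huw hp (by linarith) (by linarith)
  · rw [← AddSubgroup.closure_pair_neg_right] at huw
    refine exists_farthest_of_obtuse_basis huw ?_ ?_ ?_ <;>
      simp only [dot2_neg_right, normSq_neg] <;> linarith [le_abs_self (dot2 u w)]
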